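/- arXiv:1506.08994 — 2 statements merged into one kernel-verified Lean document; each statement's English description precedes it below -/
import Mathlib

section
/- Let C be the W-characteristic set of ⟨P⟩. If C is an ascending set, then C is a Ritt characteristic set of ⟨P⟩. -/
open MvPolynomial

namespace CharSets

variable {n : ℕ} {K : Type*} [Field K]

/-- The coefficient of `x_i ^ d` in `F`, as a polynomial in the remaining variables. -/
noncomputable def coefv (i : Fin n) (d : ℕ) (F : MvPolynomial (Fin n) K) :
    MvPolynomial (Fin n) K :=
  ∑ m ∈ F.support.filter (fun m => m i = d), monomial (Finsupp.erase i m) (F.coeff m)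

/-- The leading coefficient of `F` with respect to the variable `x_i`. -/
noncomputable def lcv (i : Fin n) (F : MvPolynomial (Fin n) K) : MvPolynomial (Fin n) K :=
  coefv i (F.degreeOf i) F

/-- Auxiliary pseudo-division: computes (pseudo-quotient, pseudo-remainder) pairs,
with the first argument as fuel; the total power of the leading coefficient used is
exactly the fuel, so that starting with fuel `max(l - m + 1, 0)` yields the pair
`(Q, R)` of the unique representation `lc(F,x_i)^q • G = Q*F + R` with
`q = max(l - m + 1, 0)` and `deg(R, x_i) < deg(F, x_i)`. -/
noncomputable def pdivAux (i : Fin n) (F : MvPolynomial (Fin n) K) :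
    ℕ → MvPolynomial (Fin n) K × MvPolynomial (Fin n) K →
      MvPolynomial (Fin n) K × MvPolynomial (Fin n) K
  | 0, QR => QR
  | q + 1, QR =>
    if (QR.2).degreeOf i < F.degreeOf i then
      (lcv i F ^ (q + 1) * QR.1, lcv i F ^ (q + 1) * QR.2)
    else
      pdivAux i F q
        (lcv i F * QR.1 +
            coefv i ((QR.2).degreeOf i) QR.2 * X i ^ ((QR.2).degreeOf i - F.degreeOf i),
          lcv i F * QR.2 -
            coefv i ((QR.2).degreeOf i) QR.2 * X i ^ ((QR.2).degreeOf i - F.degreeOf i) * F)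

/-- The pseudo-remainder `prem(G, F, x_i)`. -/
noncomputable def prem (G F : MvPolynomial (Fin n) K) (i : Fin n) : MvPolynomial (Fin n) K :=
  (pdivAux i F (G.degreeOf i + 1 - F.degreeOf i) (0, G)).2

/-- The pseudo-quotient `pquo(G, F, x_i)`. -/
noncomputable def pquo (G F : MvPolynomial (Fin n) K) (i : Fin n) : MvPolynomial (Fin n) K :=
  (pdivAux i F (G.degreeOf i + 1 - F.degreeOf i) (0, G)).1

/-- The class of `P`: the largest index (1-based) of a variable actually occurring in `P`;
the class of a constant is `0`. -/
noncomputable def cls (P : MvPolynomial (Fin n) K) : ℕ :=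
  P.vars.sup fun i => (i : ℕ) + 1

/-- The degree of `G` in the leading variable of `P` (`0` if `P` is constant). -/
noncomputable def degLv (G P : MvPolynomial (Fin n) K) : ℕ :=
  if h : P.vars.Nonempty then G.degreeOf (P.vars.max' h) else 0

/-- `G` is R-reduced with respect to `P`, i.e. `deg(G, lv(P)) < deg(P, lv(P))`. -/
def RReduced (G P : MvPolynomial (Fin n) K) : Prop :=
  degLv G P < degLv P P

/-- The initial of `P`: its leading coefficient w.r.t. its leading variable. -/
noncomputable def ini (P : MvPolynomial (Fin n) K) : MvPolynomial (Fin n) K :=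
  if h : P.vars.Nonempty then lcv (P.vars.max' h) P else P

/-- Pseudo-remainder of `G` w.r.t. `F` in the leading variable of `F`
(in case `F` is constant, `m = 0` and the pseudo-remainder is `0`). -/
noncomputable def premLv (G F : MvPolynomial (Fin n) K) : MvPolynomial (Fin n) K :=
  if h : F.vars.Nonempty then prem G F (F.vars.max' h) else 0

/-- Pseudo-quotient of `G` w.r.t. `F` in the leading variable of `F`. -/
noncomputable def pquoLv (G F : MvPolynomial (Fin n) K) : MvPolynomial (Fin n) K :=
  if h : F.vars.Nonempty then pquo G F (F.vars.max' h) else 0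

/-- Iterated pseudo-remainder with respect to a triangular set `[T_1, …, T_r]`:
`prem(P, T) = prem(⋯prem(P, T_r, lv(T_r)), …, T_1, lv(T_1))`. -/
noncomputable def premTS (P : MvPolynomial (Fin n) K) (L : List (MvPolynomial (Fin n) K)) :
    MvPolynomial (Fin n) K :=
  L.foldr (fun T acc => premLv acc T) P

/-- The Sylvester matrix of `F` and `G` with respect to the variable `x_i`. -/
noncomputable def sylvester (i : Fin n) (F G : MvPolynomial (Fin n) K) :
    Matrix (Fin (G.degreeOf i + F.degreeOf i)) (Fin (G.degreeOf i + F.degreeOf i))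
      (MvPolynomial (Fin n) K) :=
  Matrix.of fun r c =>
    if (r : ℕ) < G.degreeOf i then
      if (r : ℕ) ≤ (c : ℕ) ∧ (c : ℕ) ≤ (r : ℕ) + F.degreeOf i then
        coefv i (F.degreeOf i + (r : ℕ) - (c : ℕ)) F
      else 0
    else
      if (r : ℕ) - G.degreeOf i ≤ (c : ℕ) ∧ (c : ℕ) ≤ (r : ℕ) then
        coefv i (G.degreeOf i + ((r : ℕ) - G.degreeOf i) - (c : ℕ)) G
      else 0

/-- The resultant `res(F, G, x_i)` of `F` and `G` w.r.t. `x_i`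
(the determinant of the Sylvester matrix). -/
noncomputable def resv (F G : MvPolynomial (Fin n) K) (i : Fin n) : MvPolynomial (Fin n) K :=
  (sylvester i F G).det

/-- Resultant of `F` and `G` w.r.t. the leading variable of `G`. -/
noncomputable def resLv (F G : MvPolynomial (Fin n) K) : MvPolynomial (Fin n) K :=
  if h : G.vars.Nonempty then resv F G (G.vars.max' h) else F

/-- Iterated resultant with respect to a triangular set:
`res(F, T) = res(⋯res(F, T_r, lv(T_r)), …, T_1, lv(T_1))`. -/
noncomputable def resTS (F : MvPolynomial (Fin n) K) (L : List (MvPolynomial (Fin n) K)) :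
    MvPolynomial (Fin n) K :=
  L.foldr (fun T acc => resLv acc T) F

/-- A triangular set: a nonempty ordered set of nonconstant polynomials with
strictly increasing classes. -/
def TriangularSet (L : List (MvPolynomial (Fin n) K)) : Prop :=
  L ≠ [] ∧ (∀ T ∈ L, 0 < cls T) ∧ L.Chain' fun A B => cls A < cls B

/-- An ascending set: either a single nonzero constant, or a triangular set in which
every later element is R-reduced with respect to every earlier one. -/
def AscendingSet (L : List (MvPolynomial (Fin n) K)) : Prop :=
  (∃ a : K, a ≠ 0 ∧ L = [MvPolynomial.C a]) ∨
    (TriangularSet L ∧ L.Pairwise fun A B => RReduced B A)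

/-- `F` has lower rank than `G`. -/
def rkLT (F G : MvPolynomial (Fin n) K) : Prop :=
  cls F < cls G ∨ (cls F = cls G ∧ 0 < cls F ∧ degLv F F < degLv G G)

/-- `F` and `G` have the same rank: neither has lower rank than the other. -/
def rkEQ (F G : MvPolynomial (Fin n) K) : Prop :=
  ¬ rkLT F G ∧ ¬ rkLT G F

/-- `B` has lower rank than `A` (as ascending sets). -/
def ascLT (B A : List (MvPolynomial (Fin n) K)) : Prop :=
  (∃ j, j < min A.length B.length ∧
      (∀ i, i < j → rkEQ (A.getD i 0) (B.getD i 0)) ∧ rkLT (B.getD j 0) (A.getD j 0)) ∨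
    (A.length < B.length ∧ ∀ i, i < A.length → rkEQ (A.getD i 0) (B.getD i 0))

/-- A Ritt characteristic set of the ideal `I`: an ascending set contained in `I`
of minimal rank among all ascending sets contained in `I`. -/
def RittCharSet (I : Ideal (MvPolynomial (Fin n) K)) (A : List (MvPolynomial (Fin n) K)) :
    Prop :=
  AscendingSet A ∧ (∀ a ∈ A, a ∈ I) ∧
    ∀ B : List (MvPolynomial (Fin n) K), AscendingSet B → (∀ b ∈ B, b ∈ I) → ¬ ascLT B A

/-- The saturated ideal of a triangular set, as a set of polynomials. -/
def satTS (L : List (MvPolynomial (Fin n) K)) : Set (MvPolynomial (Fin n) K) :=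
  {F | ∃ q : ℕ, 0 < q ∧ (L.map ini).prod ^ q * F ∈ Ideal.span {T | T ∈ L}}

/-- A regular set: a triangular set such that `res(ini(T_j), [T_1, …, T_{j-1}]) ≠ 0`
for `j = 2, …, r`. -/
def RegularSet (L : List (MvPolynomial (Fin n) K)) : Prop :=
  TriangularSet L ∧
    ∀ j : ℕ, 0 < j → j < L.length → resTS (ini (L.getD j 0)) (L.take j) ≠ 0

/-- A normal triangular set: `deg(ini(T_j), lv(T_i)) = 0` for all `i < j`. -/
def NormalSet (L : List (MvPolynomial (Fin n) K)) : Prop :=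
  TriangularSet L ∧ L.Pairwise fun A B => degLv (ini B) A = 0

/-- The purely lexicographical order on monomials determined by `x_1 < ⋯ < x_n`. -/
def plexLT (a b : Fin n →₀ ℕ) : Prop :=
  ∃ k : Fin n, a k < b k ∧ ∀ j : Fin n, k < j → a j = b j

/-- `m` is the leading monomial of `P` w.r.t. the plex order. -/
def IsLpp (P : MvPolynomial (Fin n) K) (m : Fin n →₀ ℕ) : Prop :=
  m ∈ P.support ∧ ∀ m' ∈ P.support, m' ≠ m → plexLT m' m

/-- `G` is the reduced (Buchberger–)Gröbner basis of the ideal `I` w.r.t. the plex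
term order determined by `x_1 < ⋯ < x_n`: its elements are nonzero monic members of `I`,
the leading monomial of every nonzero member of `I` is divisible by the leading monomial
of some element of `G`, every element of `G` is B-reduced w.r.t. the others, and `G`
generates `I`. -/
def IsReducedGB (I : Ideal (MvPolynomial (Fin n) K)) (G : Finset (MvPolynomial (Fin n) K)) :
    Prop :=
  (∀ g ∈ G, g ∈ I ∧ g ≠ 0 ∧ ∀ m, IsLpp g m → g.coeff m = 1) ∧
    (∀ F ∈ I, F ≠ 0 → ∃ g ∈ G, ∃ mg mF, IsLpp g mg ∧ IsLpp F mF ∧ mg ≤ mF) ∧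
    (∀ g ∈ G, ∀ g' ∈ G, g' ≠ g → ∀ m ∈ g.support, ∀ m', IsLpp g' m' → ¬ m' ≤ m) ∧
    Ideal.span (G : Set (MvPolynomial (Fin n) K)) = I

/-- `Cs` is the W-characteristic set of `I`: the minimal triangular set contained in the
reduced plex Gröbner basis `G` of `I`, i.e. for each class realized in `G`, `Cs` contains
the element of that class whose leading monomial is minimal w.r.t. the plex order, the
elements being ordered by increasing class (equivalently, by the plex order). -/
def IsWCharSet (I : Ideal (MvPolynomial (Fin n) K)) (Cs : List (MvPolynomial (Fin n) K)) :
    Prop :=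
  ∃ G : Finset (MvPolynomial (Fin n) K), IsReducedGB I G ∧
    (Cs.Chain' fun A B => cls A < cls B) ∧
    (∀ c ∈ Cs, c ∈ G) ∧
    (∀ g ∈ G, ∃ c ∈ Cs, cls c = cls g) ∧
    ∀ c ∈ Cs, ∀ g ∈ G, cls g = cls c → g ≠ c →
      ∃ mc mg, IsLpp c mc ∧ IsLpp g mg ∧ plexLT mc mg

/-- The set of common zeros of a set `S` of polynomials over `k`, taken in `Kc ^ n`
for an extension `Kc` of `k`. -/
def zeroSet {k : Type*} [Field k] (Kc : Type*) [CommRing Kc] [Algebra k Kc]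
    (S : Set (MvPolynomial (Fin n) k)) : Set (Fin n → Kc) :=
  {a | ∀ p ∈ S, MvPolynomial.aeval a p = 0}


/-! ### Auxiliary lemmas -/

lemma cls_eq_max' {P : MvPolynomial (Fin n) K} (h : P.vars.Nonempty) :
    cls P = (P.vars.max' h : ℕ) + 1 := by
  unfold cls
  apply le_antisymm
  · refine Finset.sup_le fun i hi => ?_
    have := P.vars.le_max' i hi
    omega
  · exact Finset.le_sup (f := fun i : Fin n => (i:ℕ)+1) (P.vars.max'_mem h)

lemma cls_pos_iff {P : MvPolynomial (Fin n) K} : 0 < cls P ↔ P.vars.Nonempty := by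
  constructor
  · intro h
    by_contra hne
    rw [Finset.not_nonempty_iff_eq_empty] at hne
    simp [cls, hne] at h
  · intro h; rw [cls_eq_max' h]; omega

lemma exp_le_degreeOf {F : MvPolynomial (Fin n) K} {m : Fin n →₀ ℕ}
    (h : m ∈ F.support) (i : Fin n) : m i ≤ F.degreeOf i := by
  rw [degreeOf_eq_sup]; exact Finset.le_sup (f := fun m => m i) h

lemma degreeOf_pos_of_mem_vars {F : MvPolynomial (Fin n) K} {i : Fin n} (h : i ∈ F.vars) :
    0 < F.degreeOf i := by
  rw [mem_vars] at h
  obtain ⟨d, hd, hid⟩ := h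
  have h1 := exp_le_degreeOf hd i
  have h2 : d i ≠ 0 := Finsupp.mem_support_iff.mp hid
  omega

lemma mem_vars_of_degreeOf_pos {F : MvPolynomial (Fin n) K} {i : Fin n}
    (h : 0 < F.degreeOf i) : i ∈ F.vars := by
  by_contra hi
  have hall : ∀ m ∈ F.support, m i = 0 := by
    intro m hm
    by_contra h0
    exact hi ((mem_vars i).mpr ⟨m, hm, Finsupp.mem_support_iff.mpr h0⟩)
  have : F.degreeOf i ≤ 0 := by
    rw [degreeOf_eq_sup]
    exact Finset.sup_le fun m hm => le_of_eq (hall m hm)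
  omega

lemma exp_eq_zero_of_max_lt {F : MvPolynomial (Fin n) K} (h : F.vars.Nonempty)
    {m : Fin n →₀ ℕ} (hm : m ∈ F.support) {k : Fin n} (hk : F.vars.max' h < k) :
    m k = 0 := by
  by_contra h0
  have hkv : k ∈ F.vars := (mem_vars k).mpr ⟨m, hm, Finsupp.mem_support_iff.mpr h0⟩
  exact absurd (F.vars.le_max' k hkv) (not_le.mpr hk)

lemma IsLpp.exp_max {F : MvPolynomial (Fin n) K} {m : Fin n →₀ ℕ}
    (hm : IsLpp F m) (h : F.vars.Nonempty) :
    m (F.vars.max' h) = F.degreeOf (F.vars.max' h) := by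
  set v := F.vars.max' h with hv
  have hle := exp_le_degreeOf hm.1 v
  rcases Nat.lt_or_ge (m v) (F.degreeOf v) with hlt | hge
  · exfalso
    have hpos : 0 < F.degreeOf v := degreeOf_pos_of_mem_vars (F.vars.max'_mem h)
    have hsne : F.support.Nonempty := by
      by_contra hs
      rw [Finset.not_nonempty_iff_eq_empty] at hs
      rw [degreeOf_eq_sup, hs] at hpos
      simp at hpos
    obtain ⟨m', hm', he⟩ := F.support.exists_mem_eq_sup hsne (fun m => m v)
    have hm'v : m' v = F.degreeOf v := by rw [degreeOf_eq_sup, he]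
    have hne : m' ≠ m := fun hmm => by rw [hmm] at hm'v; omega
    obtain ⟨k, hk1, hk2⟩ := hm.2 m' hm' hne
    rcases lt_trichotomy k v with hkv | hkv | hkv
    · have := hk2 v hkv; omega
    · rw [hkv] at hk1; omega
    · have := exp_eq_zero_of_max_lt h hm.1 hkv; omega
  · omega

lemma eq_C_of_vars_empty {F : MvPolynomial (Fin n) K} (h : ¬ F.vars.Nonempty) :
    F = C (F.coeff 0) := by
  rw [Finset.not_nonempty_iff_eq_empty] at h
  ext m
  rcases eq_or_ne m 0 with rfl | hm
  · simp
  · have hms : m ∉ F.support := by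
      intro hms
      obtain ⟨i, hi⟩ := Finsupp.ne_iff.mp hm
      have : i ∈ F.vars :=
        (mem_vars i).mpr ⟨m, hms, Finsupp.mem_support_iff.mpr (by simpa using hi)⟩
      rw [h] at this
      simp at this
    have h1 : F.coeff m = 0 := by simpa [MvPolynomial.mem_support_iff] using hms
    classical
    rw [h1, coeff_C, if_neg (by exact fun h0 => hm h0.symm)]

lemma span_top_of_const_mem {I : Ideal (MvPolynomial (Fin n) K)} {g : MvPolynomial (Fin n) K}
    (hg : g ∈ I) (hg0 : g ≠ 0) (h : ¬ g.vars.Nonempty) : I = ⊤ := by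
  have hC := eq_C_of_vars_empty h
  have ha : g.coeff 0 ≠ 0 := fun h0 => hg0 (by rw [hC, h0, map_zero])
  exact Ideal.eq_top_of_isUnit_mem _ hg
    (hC ▸ ((isUnit_iff_ne_zero.mpr ha).map (C : K →+* MvPolynomial (Fin n) K)))

lemma degLv_eq {G P : MvPolynomial (Fin n) K} (h : P.vars.Nonempty) :
    degLv G P = G.degreeOf (P.vars.max' h) := dif_pos h

/-- Theorem mainth0. Let `C` be the W-characteristic set of `⟨P⟩`.
If `C` is an ascending set, then `C` is a Ritt characteristic set of `⟨P⟩`. -/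
theorem statement10 {n : ℕ} {K : Type*} [Field K]
    (P : Finset (MvPolynomial (Fin n) K)) (hne : P.Nonempty) (h0 : ∀ p ∈ P, p ≠ 0)
    (hproper : Ideal.span (P : Set (MvPolynomial (Fin n) K)) ≠ ⊤)
    (Cs : List (MvPolynomial (Fin n) K))
    (hW : IsWCharSet (Ideal.span (P : Set (MvPolynomial (Fin n) K))) Cs)
    (hAsc : AscendingSet Cs) :
    RittCharSet (Ideal.span (P : Set (MvPolynomial (Fin n) K))) Cs := by
  obtain ⟨G, hGB, hchain, hsub, hcover, hmin⟩ := hW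
  obtain ⟨hG1, hGdiv, -, -⟩ := hGB
  have hCsI : ∀ c ∈ Cs, c ∈ Ideal.span (P : Set (MvPolynomial (Fin n) K)) :=
    fun c hc => (hG1 c (hsub c hc)).1
  refine ⟨hAsc, hCsI, ?_⟩
  intro B hB hBI hlt
  -- `B` must be a triangular set (not a constant)
  have hBtri : TriangularSet B ∧ B.Pairwise fun A B => RReduced B A := by
    rcases hB with ⟨a, ha, rfl⟩ | h
    · exact absurd (Ideal.eq_top_of_isUnit_mem _ (hBI _ (List.mem_singleton_self _))
        ((isUnit_iff_ne_zero.mpr ha).map (C : K →+* MvPolynomial (Fin n) K))) hproper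
    · exact h
  obtain ⟨⟨-, hBpos, -⟩, hBred⟩ := hBtri
  -- classes are strictly increasing along `Cs`
  have hCsmono : ∀ i j : ℕ, ∀ (hi : i < Cs.length) (hj : j < Cs.length),
      i < j → cls Cs[i] < cls Cs[j] := by
    intro i j hi hj hij
    haveI : IsTrans (MvPolynomial (Fin n) K) (fun A B => cls A < cls B) :=
      ⟨fun _ _ _ => lt_trans⟩
    exact List.pairwise_iff_getElem.mp (List.isChain_iff_pairwise.mp hchain) i j hi hj hij
  -- extract the witness index `j` from `ascLT B Cs`
  obtain ⟨j, hjB, hjCs, hEq, hcase⟩ :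
      ∃ j, j < B.length ∧ j ≤ Cs.length ∧
        (∀ i, i < j → rkEQ (Cs.getD i 0) (B.getD i 0)) ∧
        (j < Cs.length → rkLT (B.getD j 0) (Cs.getD j 0)) := by
    rcases hlt with ⟨j, hj, hEq', hlt'⟩ | ⟨hlen, hEq'⟩
    · rw [lt_min_iff] at hj
      exact ⟨j, hj.2, le_of_lt hj.1, hEq', fun _ => hlt'⟩
    · exact ⟨Cs.length, hlen, le_refl _, fun i hi => hEq' i hi,
        fun h => absurd h (lt_irrefl _)⟩
  set F := B.getD j 0 with hF
  have hFB : F ∈ B := by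
    rw [hF, List.getD_eq_getElem _ _ hjB]; exact List.getElem_mem _
  have hFI : F ∈ Ideal.span (P : Set (MvPolynomial (Fin n) K)) := hBI F hFB
  have hFpos : 0 < cls F := hBpos F hFB
  have hFne : F ≠ 0 := by
    intro h0
    rw [h0] at hFpos
    simp [cls, vars_0] at hFpos
  -- the Gröbner basis element whose lpp divides lpp F
  obtain ⟨g, hgG, mg, mF, hlg, hlF, hdvd⟩ := hGdiv F hFI hFne
  obtain ⟨hgI, hg0, -⟩ := hG1 g hgG
  have hgvars : g.vars.Nonempty := by
    by_contra h
    exact hproper (span_top_of_const_mem hgI hg0 h)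
  set vg := g.vars.max' hgvars with hvg
  have hdg : mg vg = g.degreeOf vg := hlg.exp_max hgvars
  have hdgpos : 0 < g.degreeOf vg := degreeOf_pos_of_mem_vars (g.vars.max'_mem hgvars)
  have hmFvg : g.degreeOf vg ≤ F.degreeOf vg := by
    have h1 : mg vg ≤ mF vg := hdvd vg
    have h2 := exp_le_degreeOf hlF.1 vg
    omega
  have hvgF : vg ∈ F.vars := mem_vars_of_degreeOf_pos (by omega)
  have hclsgF : cls g ≤ cls F := by
    rw [cls_eq_max' hgvars]
    exact Finset.le_sup (f := fun i : Fin n => (i : ℕ) + 1) hvgF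
  -- the element of `Cs` of the same class as `g`
  obtain ⟨c, hcCs, hclscg⟩ := hcover g hgG
  have hcG := hsub c hcCs
  have hclsgpos : 0 < cls g := by rw [cls_eq_max' hgvars]; omega
  have hcvars : c.vars.Nonempty := cls_pos_iff.mp (by omega)
  have hvc : c.vars.max' hcvars = vg := by
    have h1 := hclscg
    rw [cls_eq_max' hcvars, cls_eq_max' hgvars] at h1
    exact Fin.val_injective (by omega)
  -- the degree of `c` at `vg` is at most that of `g`
  have hdcg : c.degreeOf vg ≤ g.degreeOf vg := by
    rcases eq_or_ne g c with rfl | hne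
    · exact le_refl _
    · obtain ⟨mc, mg', hlc, hlg', ⟨k, hk1, hk2⟩⟩ := hmin c hcCs g hgG hclscg.symm hne
      have h1 : mc vg = c.degreeOf vg := by
        have := hlc.exp_max hcvars; rwa [hvc] at this
      have h2 : mg' vg = g.degreeOf vg := hlg'.exp_max hgvars
      rcases lt_trichotomy k vg with hkv | hkv | hkv
      · have := hk2 vg hkv; omega
      · rw [hkv] at hk1; omega
      · have := exp_eq_zero_of_max_lt hgvars hlg'.1 hkv; omega
  -- position of `c` in `Cs`
  obtain ⟨t, htlen, htc⟩ := List.mem_iff_getElem.mp hcCs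
  have htj : t < j := by
    rcases Nat.lt_or_ge t j with h | h
    · exact h
    · exfalso
      have hjlt : j < Cs.length := lt_of_le_of_lt h htlen
      have hrk := hcase hjlt
      rw [List.getD_eq_getElem _ _ hjlt] at hrk
      rcases Nat.eq_or_lt_of_le h with rfl | hjt
      · -- here `Cs[j] = c`
        rw [htc] at hrk
        rcases hrk with hlt1 | ⟨hceq, -, hdeg⟩
        · omega
        · have hFvars : F.vars.Nonempty := ⟨vg, hvgF⟩
          have hvF : F.vars.max' hFvars = vg := by
            have h1 : cls F = cls c := hceq
            rw [cls_eq_max' hFvars, cls_eq_max' hcvars] at h1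
            rw [← hvc]
            exact Fin.val_injective (by omega)
          rw [degLv_eq hFvars, degLv_eq hcvars, hvF, hvc] at hdeg
          omega
      · have hmono := hCsmono j t hjlt htlen hjt
        rw [htc] at hmono
        rcases hrk with hlt1 | ⟨hceq, -, -⟩ <;> omega
  -- `c` and `B[t]` have equal rank
  have htB : t < B.length := lt_trans htj hjB
  have htCs : t < Cs.length := htlen
  have hEqt := hEq t htj
  rw [List.getD_eq_getElem _ _ htCs, List.getD_eq_getElem _ _ htB, htc] at hEqt
  obtain ⟨h1, h2⟩ := hEqt
  have hclsBt : cls B[t] = cls c := by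
    by_contra h
    rcases Nat.lt_or_ge (cls B[t]) (cls c) with hcc | hcc
    · exact h2 (Or.inl hcc)
    · exact h1 (Or.inl (lt_of_le_of_ne hcc (fun hh => h hh.symm)))
  have hBtvars : B[t].vars.Nonempty := cls_pos_iff.mp (by omega)
  have hvBt : B[t].vars.max' hBtvars = vg := by
    have he := hclsBt
    rw [cls_eq_max' hBtvars, cls_eq_max' hcvars] at he
    rw [← hvc]
    exact Fin.val_injective (by omega)
  have hd1 : ¬ degLv c c < degLv B[t] B[t] :=
    fun hd => h1 (Or.inr ⟨hclsBt.symm, by omega, hd⟩)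
  have hd2 : ¬ degLv B[t] B[t] < degLv c c :=
    fun hd => h2 (Or.inr ⟨hclsBt, by omega, hd⟩)
  have hdegBt : B[t].degreeOf vg = c.degreeOf vg := by
    rw [degLv_eq hBtvars, degLv_eq hcvars, hvBt, hvc] at hd1 hd2
    omega
  -- `F = B[j]` is R-reduced w.r.t. `B[t]`: contradiction
  have hred : RReduced B[j] B[t] :=
    List.pairwise_iff_getElem.mp hBred t j htB hjB htj
  have hFj : B[j] = F := (List.getD_eq_getElem _ _ hjB).symm
  rw [hFj] at hred
  unfold RReduced at hred
  rw [degLv_eq hBtvars, degLv_eq hBtvars, hvBt] at hred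
  omega

end CharSets
end

section
/- Let [C_1,…,C_r] be the W-characteristic set of ⟨P⟩ under the stated variable ordering. For any 1 ≤ k < r, if C_k = [C_1,…,C_k] is normal and the initial I_{k+1} = ini(C_{k+1}), with lv(I_{k+1}) = y_l, is not R-reduced with respect to C_l, then prem(I_{k+1}, C_k) = 0 and prem(C_{k+1}, C_k) = 0. -/
/-!
The argument rests on one property of a W-characteristic set `C` of an ideal `I`: the leading
monomial of a nonzero `F ∈ I` is divisible by that of an element of the reduced Gröbner basis,
which has the class of some `C_j` and a leading monomial at least that of `C_j`. So the leading
monomial of `F` dominates that of `C_j` and has at least the degree of `C_j` in `lv(C_j)`; in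
particular an element of `I` that is R-reduced with respect to all of `C` vanishes.

For the initial `I_{k+1}`, suppose `R = prem(I_{k+1}, C_k) ≠ 0`, so `J I_{k+1} ≡ R` modulo
`⟨C_k⟩`, and write `C_{k+1} = I_{k+1} y^d + T` with `deg(T, y) < d`. Then
`V = R y^d + J T ≡ J C_{k+1}` lies in `I` and its leading monomial is `lpp(R) y^d`. No `C_j` with
`j ≠ k + 1` fits this monomial, because `R` is reduced with respect to `C_j`, and neither does
`C_{k+1}`, whose leading monomial is `lpp(I_{k+1}) y^d > lpp(R) y^d`: `I_{k+1}` is not reduced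
with respect to `C_l`, while `R` is.

For `C_{k+1}`, the `y^d`-coefficient `S` of `R' = prem(C_{k+1}, C_k)` is congruent to
`J' I_{k+1}`, so `J S ∈ ⟨C_k⟩` by the first part. Normality keeps `J` free of the leading
variables of `C_k`, so `J S` is reduced and vanishes; hence `deg(R', y) < d`, and `R' = 0`.
-/

open MvPolynomial

namespace CharSets

variable {n : ℕ} {K : Type*} [Field K]

/-! ### Coefficients with respect to one variable -/

lemma eq_add_single_iff {i : Fin n} {d : ℕ} {m μ : Fin n →₀ ℕ} (hμ : μ i = 0) :
    m = μ + Finsupp.single i d ↔ Finsupp.erase i m = μ ∧ m i = d := by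
  constructor
  · rintro rfl
    refine ⟨?_, by simp [hμ]⟩
    ext j
    rcases eq_or_ne j i with rfl | hj
    · simp [hμ]
    · simp [Finsupp.erase_ne hj]
  · rintro ⟨rfl, rfl⟩
    exact (Finsupp.erase_add_single i m).symm

lemma coeff_coefv (i : Fin n) (d : ℕ) (F : MvPolynomial (Fin n) K) (μ : Fin n →₀ ℕ) :
    (coefv i d F).coeff μ = if μ i = 0 then F.coeff (μ + Finsupp.single i d) else 0 := by
  classical
  simp only [coefv, coeff_sum, coeff_monomial]
  split_ifs with hμ
  · rw [Finset.sum_eq_single (μ + Finsupp.single i d)]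
    · simp [hμ]
    · intro m hm hne
      rw [if_neg]
      exact fun h => hne ((eq_add_single_iff hμ).2 ⟨h, (Finset.mem_filter.1 hm).2⟩)
    · intro h
      rw [if_pos ((eq_add_single_iff hμ).1 rfl).1]
      simpa [hμ] using h
  · refine Finset.sum_eq_zero fun m _ => if_neg fun h => hμ ?_
    simp [← h]

lemma degreeOf_le_iff {i : Fin n} {F : MvPolynomial (Fin n) K} {d : ℕ} :
    F.degreeOf i ≤ d ↔ ∀ m ∈ F.support, m i ≤ d := by
  rw [degreeOf_eq_sup, Finset.sup_le_iff]

lemma exists_mem_support_apply_eq_degreeOf {F : MvPolynomial (Fin n) K} (h : F ≠ 0)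
    (i : Fin n) : ∃ m ∈ F.support, m i = F.degreeOf i := by
  obtain ⟨m, hm, hmax⟩ :=
    Finset.exists_mem_eq_sup F.support (support_nonempty.2 h) (fun m => m i)
  exact ⟨m, hm, by rw [degreeOf_eq_sup, hmax]⟩

lemma apply_eq_zero_of_mem_support {F : MvPolynomial (Fin n) K} {m : Fin n →₀ ℕ}
    (hm : m ∈ F.support) {w : Fin n} (hw : F.degreeOf w = 0) : m w = 0 :=
  Nat.eq_zero_of_le_zero (hw ▸ monomial_le_degreeOf w hm)

noncomputable def coefvHom (i : Fin n) (d : ℕ) :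
    MvPolynomial (Fin n) K →+ MvPolynomial (Fin n) K where
  toFun := coefv i d
  map_zero' := by ext; simp [coeff_coefv]
  map_add' F G := by ext; simp only [coeff_coefv, coeff_add]; split_ifs <;> simp

lemma coefvHom_apply (i : Fin n) (d : ℕ) (F : MvPolynomial (Fin n) K) :
    coefvHom i d F = coefv i d F := rfl

lemma coefv_sub (i : Fin n) (d : ℕ) (F G : MvPolynomial (Fin n) K) :
    coefv i d (F - G) = coefv i d F - coefv i d G :=
  map_sub (coefvHom i d) F G

lemma coefv_eq_zero_of_degreeOf_lt {i : Fin n} {d : ℕ} {F : MvPolynomial (Fin n) K}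
    (h : F.degreeOf i < d) : coefv i d F = 0 := by
  ext μ
  rw [coeff_coefv, coeff_zero]
  split_ifs with hμ
  · by_contra hc
    have := monomial_le_degreeOf i (mem_support_iff.2 hc)
    simp [hμ] at this
    omega
  · rfl

lemma mem_vars_coefv {i : Fin n} {d : ℕ} {F : MvPolynomial (Fin n) K} {v : Fin n}
    (h : v ∈ (coefv i d F).vars) : v ∈ F.vars ∧ v ≠ i := by
  obtain ⟨μ, hμ, hv⟩ := (mem_vars_iff_mem_support v).1 h
  rw [mem_support_iff, coeff_coefv] at hμ
  split_ifs at hμ with hi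
  · have hvi : v ≠ i := by rintro rfl; exact Finsupp.mem_support_iff.1 hv hi
    refine ⟨(mem_vars_iff_mem_support v).2 ⟨_, mem_support_iff.2 hμ, ?_⟩, hvi⟩
    simpa [Finsupp.single_apply, hvi.symm] using hv
  · exact absurd rfl hμ

lemma degreeOf_coefv_self (i : Fin n) (d : ℕ) (F : MvPolynomial (Fin n) K) :
    (coefv i d F).degreeOf i = 0 := by
  by_contra h
  exact (mem_vars_coefv (mem_vars_iff_degreeOf_ne_zero.2 h)).2 rfl

lemma degreeOf_coefv_le (i : Fin n) (d : ℕ) (F : MvPolynomial (Fin n) K) (j : Fin n) :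
    (coefv i d F).degreeOf j ≤ F.degreeOf j := by
  refine degreeOf_le_iff.2 fun μ hμ => ?_
  rw [mem_support_iff, coeff_coefv] at hμ
  split_ifs at hμ
  · exact le_trans (by simp) (monomial_le_degreeOf j (mem_support_iff.2 hμ))
  · exact absurd rfl hμ

lemma coefv_degreeOf_ne_zero {F : MvPolynomial (Fin n) K} (h : F ≠ 0) (i : Fin n) :
    coefv i (F.degreeOf i) F ≠ 0 := by
  obtain ⟨m, hm, hmi⟩ := exists_mem_support_apply_eq_degreeOf h i
  intro hc
  have := congrArg (coeff (Finsupp.erase i m)) hc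
  rw [coeff_coefv, if_pos (by simp), ← hmi, Finsupp.erase_add_single, coeff_zero] at this
  exact mem_support_iff.1 hm this

lemma degreeOf_lt_of_coefv_eq_zero {i : Fin n} {E : MvPolynomial (Fin n) K} {d : ℕ}
    (hd : 0 < d) (h : ∀ e, d ≤ e → coefv i e E = 0) : E.degreeOf i < d := by
  by_contra hc
  rcases eq_or_ne E 0 with rfl | hE
  · simp at hc; omega
  · exact coefv_degreeOf_ne_zero hE i (h _ (by omega))

lemma coefv_monomial_mul {i : Fin n} {m : Fin n →₀ ℕ} (hm : m i = 0) (c : K) (d : ℕ)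
    (B : MvPolynomial (Fin n) K) :
    coefv i d (monomial m c * B) = monomial m c * coefv i d B := by
  ext μ
  simp only [coeff_coefv, coeff_monomial_mul']
  by_cases hμ : μ i = 0
  · have hle : m ≤ μ + Finsupp.single i d ↔ m ≤ μ := by
      refine ⟨fun h j => ?_, fun h => h.trans le_self_add⟩
      rcases eq_or_ne j i with rfl | hj
      · simp [hm]
      · simpa [Finsupp.single_apply, hj.symm] using h j
    by_cases h : m ≤ μ
    · have hsub : μ + Finsupp.single i d - m = μ - m + Finsupp.single i d := by
        ext j
        rcases eq_or_ne j i with rfl | hj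
        · simp [hm, hμ]
        · simp [hj.symm]
      simp [hμ, hle, h, hsub, hm]
    · simp [hμ, hle, h]
  · by_cases h : m ≤ μ
    · simp [hμ, h, hm]
    · simp [hμ, h]

lemma coefv_mul_left {i : Fin n} {A : MvPolynomial (Fin n) K} (hA : A.degreeOf i = 0)
    (d : ℕ) (B : MvPolynomial (Fin n) K) :
    coefv i d (A * B) = A * coefv i d B := by
  conv_lhs => rw [A.as_sum, Finset.sum_mul, ← coefvHom_apply, map_sum]
  conv_rhs => rw [A.as_sum, Finset.sum_mul]
  exact Finset.sum_congr rfl fun m hm =>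
    coefv_monomial_mul (apply_eq_zero_of_mem_support hm hA) _ _ B

lemma coefv_X_pow_mul {i : Fin n} {δ e : ℕ} (h : δ ≤ e) (B : MvPolynomial (Fin n) K) :
    coefv i e (X i ^ δ * B) = coefv i (e - δ) B := by
  ext μ
  simp only [coeff_coefv, X_pow_eq_monomial, coeff_monomial_mul']
  split_ifs with hμ hle
  · rw [one_mul]
    congr 1
    ext j
    rcases eq_or_ne j i with rfl | hj
    · simp [hμ]
    · simp [hj.symm]
  · exact absurd (fun j => by rcases eq_or_ne j i with rfl | hj <;> simp [*]) hle
  · rfl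

lemma coefv_zero_of_degreeOf_eq_zero {i : Fin n} {A : MvPolynomial (Fin n) K}
    (hA : A.degreeOf i = 0) : coefv i 0 A = A := by
  ext μ
  rw [coeff_coefv]
  split_ifs with hμ
  · simp
  · by_contra hc
    exact hμ (apply_eq_zero_of_mem_support (mem_support_iff.2 (Ne.symm hc)) hA)

lemma coefv_mem_span {s : Set (MvPolynomial (Fin n) K)} {y : Fin n}
    (hs : ∀ T ∈ s, T.degreeOf y = 0) {B : MvPolynomial (Fin n) K}
    (hB : B ∈ Ideal.span s) (d : ℕ) : coefv y d B ∈ Ideal.span s := by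
  obtain ⟨c, hc, rfl⟩ := Submodule.mem_span_set.1 hB
  rw [Finsupp.sum, ← coefvHom_apply, map_sum]
  refine Ideal.sum_mem _ fun a ha => ?_
  rw [coefvHom_apply, smul_eq_mul, mul_comm, coefv_mul_left (hs a (hc ha)), mul_comm]
  exact Ideal.mul_mem_left _ _ (Ideal.subset_span (hc ha))

/-! ### Pseudo-division -/

lemma degreeOf_X_pow_le (i j : Fin n) (k : ℕ) :
    ((X j : MvPolynomial (Fin n) K) ^ k).degreeOf i ≤ k := by
  classical
  refine (degreeOf_pow_le _ _ _).trans ?_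
  rw [degreeOf_X]
  split_ifs <;> simp

lemma degreeOf_sub_lt_of_coefv_eq {i : Fin n} {d : ℕ} {F G : MvPolynomial (Fin n) K}
    (hd : 0 < d) (hF : F.degreeOf i ≤ d) (hG : G.degreeOf i ≤ d)
    (h : coefv i d F = coefv i d G) : (F - G).degreeOf i < d := by
  refine degreeOf_lt_of_coefv_eq_zero hd fun e he => ?_
  rw [coefv_sub, sub_eq_zero]
  rcases he.eq_or_lt with rfl | he
  · exact h
  · rw [coefv_eq_zero_of_degreeOf_lt (hF.trans_lt he),
      coefv_eq_zero_of_degreeOf_lt (hG.trans_lt he)]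

lemma degreeOf_lcv (i : Fin n) (F : MvPolynomial (Fin n) K) : (lcv i F).degreeOf i = 0 :=
  degreeOf_coefv_self _ _ _

lemma degreeOf_sub_lcv_mul_X_pow_lt {i : Fin n} {F : MvPolynomial (Fin n) K}
    (hF : 0 < F.degreeOf i) :
    (F - lcv i F * X i ^ F.degreeOf i).degreeOf i < F.degreeOf i := by
  refine degreeOf_sub_lt_of_coefv_eq hF le_rfl ?_ ?_
  · have h₁ := degreeOf_mul_le i (lcv i F) (X i ^ F.degreeOf i)
    have h₂ := degreeOf_X_pow_le i i (F.degreeOf i) (K := K)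
    rw [degreeOf_lcv, zero_add] at h₁
    omega
  · rw [coefv_mul_left (degreeOf_lcv i F), ← mul_one (X i ^ _), coefv_X_pow_mul le_rfl,
      Nat.sub_self, coefv_zero_of_degreeOf_eq_zero (by simp), mul_one, lcv]

lemma degreeOf_pdivAux_step_lt {i : Fin n} {F R : MvPolynomial (Fin n) K}
    (hF : 0 < F.degreeOf i) (hR : F.degreeOf i ≤ R.degreeOf i) :
    (lcv i F * R - coefv i (R.degreeOf i) R * X i ^ (R.degreeOf i - F.degreeOf i) * F).degreeOf i
      < R.degreeOf i := by
  set c := coefv i (R.degreeOf i) R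
  have hc : c.degreeOf i = 0 := degreeOf_coefv_self _ _ _
  refine degreeOf_sub_lt_of_coefv_eq (by omega) ?_ ?_ ?_
  · have := degreeOf_mul_le i (lcv i F) R
    rw [degreeOf_lcv] at this
    omega
  · have := degreeOf_mul_le i (c * X i ^ (R.degreeOf i - F.degreeOf i)) F
    have := degreeOf_mul_le i c (X i ^ (R.degreeOf i - F.degreeOf i))
    have := degreeOf_X_pow_le i i (R.degreeOf i - F.degreeOf i) (K := K)
    omega
  · rw [coefv_mul_left (degreeOf_lcv i F), mul_assoc, coefv_mul_left hc,
      coefv_X_pow_mul (by omega), Nat.sub_sub_self hR, mul_comm]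
    rfl

lemma pdivAux_snd_eq (i : Fin n) (F : MvPolynomial (Fin n) K) (f : ℕ)
    (QR : MvPolynomial (Fin n) K × MvPolynomial (Fin n) K) :
    ∃ Q, (pdivAux i F f QR).2 = lcv i F ^ f * QR.2 - Q * F := by
  induction f generalizing QR with
  | zero => exact ⟨0, by simp [pdivAux]⟩
  | succ q ih =>
    rw [pdivAux]
    split_ifs
    · exact ⟨0, by simp⟩
    · obtain ⟨Q, hQ⟩ := ih _
      refine ⟨Q + lcv i F ^ q *
        (coefv i (QR.2.degreeOf i) QR.2 * X i ^ (QR.2.degreeOf i - F.degreeOf i)), ?_⟩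
      rw [hQ]
      ring

lemma prem_eq_sub (G F : MvPolynomial (Fin n) K) (i : Fin n) :
    ∃ e Q, prem G F i = lcv i F ^ e * G - Q * F :=
  ⟨_, pdivAux_snd_eq i F _ (0, G)⟩

lemma prem_of_degreeOf_lt {G F : MvPolynomial (Fin n) K} {i : Fin n}
    (h : G.degreeOf i < F.degreeOf i) : prem G F i = G := by
  rw [prem, Nat.sub_eq_zero_of_le h, pdivAux]

lemma degreeOf_pdivAux_snd_le {i j : Fin n} (hj : j ≠ i) {F : MvPolynomial (Fin n) K}
    (hF : F.degreeOf j = 0) (f : ℕ) (QR : MvPolynomial (Fin n) K × MvPolynomial (Fin n) K) :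
    (pdivAux i F f QR).2.degreeOf j ≤ QR.2.degreeOf j := by
  have hlcv : (lcv i F).degreeOf j = 0 :=
    Nat.eq_zero_of_le_zero (hF ▸ degreeOf_coefv_le _ _ _ _)
  have hpow (e : ℕ) : (lcv i F ^ e).degreeOf j = 0 := by
    simpa [hlcv] using degreeOf_pow_le j (lcv i F) e
  induction f generalizing QR with
  | zero => simp [pdivAux]
  | succ q ih =>
    rw [pdivAux]
    split_ifs
    · simpa only [hpow, zero_add] using degreeOf_mul_le j (lcv i F ^ (q + 1)) QR.2
    · refine (ih _).trans ?_
      dsimp only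
      set c := coefv i (QR.2.degreeOf i) QR.2
      set δ := QR.2.degreeOf i - F.degreeOf i
      have := degreeOf_sub_le j (lcv i F * QR.2) (c * X i ^ δ * F)
      have := degreeOf_mul_le j (lcv i F) QR.2
      have := degreeOf_mul_le j (c * X i ^ δ) F
      have := degreeOf_mul_le j c (X i ^ δ)
      have := degreeOf_X_pow_of_ne (R := K) δ hj
      have : c.degreeOf j ≤ QR.2.degreeOf j := degreeOf_coefv_le _ _ _ j
      omega

lemma degreeOf_prem_le {i j : Fin n} (hj : j ≠ i) {F : MvPolynomial (Fin n) K}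
    (hF : F.degreeOf j = 0) (G : MvPolynomial (Fin n) K) :
    (prem G F i).degreeOf j ≤ G.degreeOf j :=
  degreeOf_pdivAux_snd_le hj hF _ _

lemma degreeOf_pdivAux_snd_lt {i : Fin n} {F : MvPolynomial (Fin n) K} (hF : 0 < F.degreeOf i)
    (f : ℕ) (QR : MvPolynomial (Fin n) K × MvPolynomial (Fin n) K)
    (h : QR.2.degreeOf i < F.degreeOf i + f) :
    (pdivAux i F f QR).2.degreeOf i < F.degreeOf i := by
  induction f generalizing QR with
  | zero => simpa [pdivAux] using h
  | succ q ih =>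
    rw [pdivAux]
    split_ifs with hd
    · have h₁ := degreeOf_mul_le i (lcv i F ^ (q + 1)) QR.2
      have h₂ := degreeOf_pow_le i (lcv i F) (q + 1)
      rw [degreeOf_lcv, mul_zero] at h₂
      dsimp only
      omega
    · refine ih _ ?_
      dsimp only
      have := degreeOf_pdivAux_step_lt hF (not_lt.1 hd)
      omega

lemma degreeOf_prem_lt {i : Fin n} {F : MvPolynomial (Fin n) K} (hF : 0 < F.degreeOf i)
    (G : MvPolynomial (Fin n) K) : (prem G F i).degreeOf i < F.degreeOf i :=
  degreeOf_pdivAux_snd_lt hF _ _ (by simp only; omega)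

/-! ### Classes, leading variables and initials -/

lemma cls_le_iff {P : MvPolynomial (Fin n) K} {k : ℕ} :
    cls P ≤ k ↔ ∀ w : Fin n, k ≤ w → P.degreeOf w = 0 := by
  simp only [cls, Finset.sup_le_iff, mem_vars_iff_degreeOf_ne_zero]
  exact ⟨fun h w hw => by_contra fun hc => by have := h w hc; omega,
    fun h v hv => by_contra fun hc => hv (h v (by omega))⟩

lemma degreeOf_eq_zero_of_cls_le {P : MvPolynomial (Fin n) K} {w : Fin n} (h : cls P ≤ w) :
    P.degreeOf w = 0 :=
  cls_le_iff.1 h w le_rfl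

lemma cls_mul_le (p q : MvPolynomial (Fin n) K) : cls (p * q) ≤ max (cls p) (cls q) := by
  classical
  exact (Finset.sup_mono (vars_mul p q)).trans Finset.sup_union.le

lemma cls_sub_le (p q : MvPolynomial (Fin n) K) : cls (p - q) ≤ max (cls p) (cls q) := by
  classical
  exact (Finset.sup_mono (vars_sub_subset p)).trans Finset.sup_union.le

lemma cls_X_pow_le (y : Fin n) (d : ℕ) : cls ((X y : MvPolynomial (Fin n) K) ^ d) ≤ y + 1 :=
  cls_le_iff.2 fun w hw => by
    rw [degreeOf_X_pow_of_ne _ (by rintro rfl; omega)]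

lemma vars_nonempty_of_cls_pos {P : MvPolynomial (Fin n) K} (h : 0 < cls P) :
    P.vars.Nonempty := by
  rw [Finset.nonempty_iff_ne_empty]
  rintro hP
  simp [cls, hP] at h

lemma cls_eq_max'_add_one {P : MvPolynomial (Fin n) K} (h : P.vars.Nonempty) :
    cls P = P.vars.max' h + 1 :=
  le_antisymm (Finset.sup_le fun i hi => by simpa using P.vars.le_max' i hi)
    (Finset.le_sup (f := fun i : Fin n => (i : ℕ) + 1) (P.vars.max'_mem h))

lemma exists_cls_eq_add_one {P : MvPolynomial (Fin n) K} (h : 0 < cls P) :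
    ∃ v : Fin n, cls P = v + 1 :=
  ⟨_, cls_eq_max'_add_one (vars_nonempty_of_cls_pos h)⟩

lemma max'_eq_of_cls_eq {P : MvPolynomial (Fin n) K} {v : Fin n} (h : cls P = v + 1) :
    P.vars.max' (vars_nonempty_of_cls_pos (by omega)) = v := by
  have := cls_eq_max'_add_one (vars_nonempty_of_cls_pos (P := P) (by omega))
  exact Fin.ext (by omega)

lemma degreeOf_pos_of_cls_eq {P : MvPolynomial (Fin n) K} {v : Fin n} (h : cls P = v + 1) :
    0 < P.degreeOf v :=
  Nat.pos_of_ne_zero (mem_vars_iff_degreeOf_ne_zero.1 (max'_eq_of_cls_eq h ▸ Finset.max'_mem _ _))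

lemma degLv_of_cls_eq (G : MvPolynomial (Fin n) K) {P : MvPolynomial (Fin n) K} {v : Fin n}
    (h : cls P = v + 1) : degLv G P = G.degreeOf v := by
  rw [degLv, dif_pos (vars_nonempty_of_cls_pos (by omega)), max'_eq_of_cls_eq h]

lemma rReduced_iff_of_cls_eq {G P : MvPolynomial (Fin n) K} {v : Fin n} (h : cls P = v + 1) :
    RReduced G P ↔ G.degreeOf v < P.degreeOf v := by
  rw [RReduced, degLv_of_cls_eq _ h, degLv_of_cls_eq _ h]

lemma degLv_eq_zero_of_cls_lt {G P : MvPolynomial (Fin n) K} (h : cls G < cls P) :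
    degLv G P = 0 := by
  obtain ⟨v, hv⟩ := exists_cls_eq_add_one (P := P) (by omega)
  rw [degLv_of_cls_eq _ hv]
  exact degreeOf_eq_zero_of_cls_le (by omega)

lemma rReduced_of_cls_lt {G P : MvPolynomial (Fin n) K} (hP : 0 < cls P) (h : cls G < cls P) :
    RReduced G P := by
  obtain ⟨v, hv⟩ := exists_cls_eq_add_one hP
  rw [RReduced, degLv_eq_zero_of_cls_lt h, degLv_of_cls_eq _ hv]
  exact degreeOf_pos_of_cls_eq hv

lemma RReduced.cls_pos {G P : MvPolynomial (Fin n) K} (h : RReduced G P) : 0 < cls P := by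
  by_contra hP
  have : ¬ P.vars.Nonempty := fun hne => hP (by rw [cls_eq_max'_add_one hne]; omega)
  simp [RReduced, degLv, this] at h

lemma ini_of_cls_eq {T : MvPolynomial (Fin n) K} {v : Fin n} (h : cls T = v + 1) :
    ini T = lcv v T := by
  rw [ini, dif_pos (vars_nonempty_of_cls_pos (by omega)), max'_eq_of_cls_eq h]

lemma ini_ne_zero {T : MvPolynomial (Fin n) K} (h : 0 < cls T) : ini T ≠ 0 := by
  obtain ⟨v, hv⟩ := exists_cls_eq_add_one h
  rw [ini_of_cls_eq hv]
  exact coefv_degreeOf_ne_zero (by rintro rfl; simp [cls] at h) _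

lemma degreeOf_ini_le (T : MvPolynomial (Fin n) K) (v : Fin n) :
    (ini T).degreeOf v ≤ T.degreeOf v := by
  unfold ini
  split_ifs
  exacts [degreeOf_coefv_le _ _ _ _, le_rfl]

lemma degreeOf_ini_of_cls_eq {T : MvPolynomial (Fin n) K} {v : Fin n} (h : cls T = v + 1) :
    (ini T).degreeOf v = 0 := by
  rw [ini_of_cls_eq h]
  exact degreeOf_lcv _ _

lemma cls_ini_lt {T : MvPolynomial (Fin n) K} (h : 0 < cls T) : cls (ini T) < cls T := by
  obtain ⟨v, hv⟩ := exists_cls_eq_add_one h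
  suffices cls (ini T) ≤ v by omega
  refine cls_le_iff.2 fun w hw => ?_
  rcases (show v ≤ w from hw).eq_or_lt with rfl | hlt
  · exact degreeOf_ini_of_cls_eq hv
  · have hTw : T.degreeOf w = 0 :=
      degreeOf_eq_zero_of_cls_le (by rw [Fin.lt_def] at hlt; omega)
    exact Nat.eq_zero_of_le_zero (hTw ▸ degreeOf_ini_le T w)

lemma RReduced.apply_lt {R c : MvPolynomial (Fin n) K} (hred : RReduced R c) {v : Fin n}
    (hc : cls c = v + 1) {m : Fin n →₀ ℕ} (hm : m ∈ R.support) : m v < c.degreeOf v :=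
  (monomial_le_degreeOf v hm).trans_lt ((rReduced_iff_of_cls_eq hc).1 hred)

lemma RReduced.mul_left {F T : MvPolynomial (Fin n) K} (h : RReduced F T)
    {J : MvPolynomial (Fin n) K} (hJ : degLv J T = 0) : RReduced (J * F) T := by
  obtain ⟨v, hv⟩ := exists_cls_eq_add_one h.cls_pos
  rw [rReduced_iff_of_cls_eq hv] at h ⊢
  rw [degLv_of_cls_eq _ hv] at hJ
  have := degreeOf_mul_le v J F
  omega

lemma RReduced.coefv {F T : MvPolynomial (Fin n) K} (h : RReduced F T) (i : Fin n) (d : ℕ) :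
    RReduced (coefv i d F) T := by
  obtain ⟨v, hv⟩ := exists_cls_eq_add_one h.cls_pos
  rw [rReduced_iff_of_cls_eq hv] at h ⊢
  exact (degreeOf_coefv_le i d F v).trans_lt h

lemma cls_coefv_le {F : MvPolynomial (Fin n) K} {y : Fin n} (hF : cls F ≤ y + 1) (d : ℕ) :
    cls (coefv y d F) ≤ y :=
  cls_le_iff.2 fun w hw => by
    rcases (show y ≤ w from hw).eq_or_lt with rfl | hlt
    · exact degreeOf_coefv_self _ _ _
    · have hFw : F.degreeOf w = 0 :=
        degreeOf_eq_zero_of_cls_le (by rw [Fin.lt_def] at hlt; omega)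
      exact Nat.eq_zero_of_le_zero (hFw ▸ degreeOf_coefv_le _ _ _ w)

/-! ### Leading monomials in the plex order -/

-- `x_n` is the most significant variable, so `plexLT` is Mathlib's colexicographic order.
lemma plexLT_iff_toColex_lt {a b : Fin n →₀ ℕ} : plexLT a b ↔ toColex a < toColex b := by
  rw [Finsupp.Colex.lt_iff]
  exact exists_congr fun _ => and_comm

lemma isLpp_iff {P : MvPolynomial (Fin n) K} {m : Fin n →₀ ℕ} :
    IsLpp P m ↔ m ∈ P.support ∧ ∀ m' ∈ P.support, toColex m' ≤ toColex m := by
  simp only [IsLpp, plexLT_iff_toColex_lt]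
  refine and_congr_right fun _ => forall₂_congr fun m' _ => ?_
  rw [le_iff_eq_or_lt, toColex_inj]
  tauto

lemma exists_isLpp {P : MvPolynomial (Fin n) K} (h : P ≠ 0) : ∃ m, IsLpp P m := by
  obtain ⟨m, hm, hmax⟩ := P.support.exists_max_image toColex (support_nonempty.2 h)
  exact ⟨m, isLpp_iff.2 ⟨hm, hmax⟩⟩

lemma IsLpp.unique {P : MvPolynomial (Fin n) K} {m₁ m₂ : Fin n →₀ ℕ}
    (h₁ : IsLpp P m₁) (h₂ : IsLpp P m₂) : m₁ = m₂ :=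
  toColex_inj.1 <| le_antisymm ((isLpp_iff.1 h₂).2 _ h₁.1) ((isLpp_iff.1 h₁).2 _ h₂.1)

lemma apply_le_of_toColex_le {a b : Fin n →₀ ℕ} {v : Fin n} (h : toColex a ≤ toColex b)
    (hb : ∀ w, v < w → b w = 0) : a v ≤ b v := by
  rcases h.eq_or_lt with h | h
  · rw [toColex_inj.1 h]
  obtain ⟨i, habove, hi⟩ := Finsupp.Colex.lt_iff.1 h
  rcases lt_trichotomy i v with hiv | rfl | hvi
  · exact (habove v hiv).le
  · exact hi.le
  · exact absurd hi (by simp [hb i hvi])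

lemma apply_eq_zero_of_cls_le {P : MvPolynomial (Fin n) K} {m : Fin n →₀ ℕ}
    (hm : m ∈ P.support) {w : Fin n} (h : cls P ≤ w) : m w = 0 :=
  apply_eq_zero_of_mem_support hm (degreeOf_eq_zero_of_cls_le h)

lemma IsLpp.apply_eq_degreeOf {P : MvPolynomial (Fin n) K} {m : Fin n →₀ ℕ} (hm : IsLpp P m)
    {v : Fin n} (hv : cls P ≤ v + 1) : m v = P.degreeOf v := by
  refine le_antisymm (monomial_le_degreeOf v hm.1) ?_
  obtain ⟨m', hm', hm'v⟩ :=
    exists_mem_support_apply_eq_degreeOf (F := P) (by rintro rfl; simp [IsLpp] at hm) v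
  rw [← hm'v]
  exact apply_le_of_toColex_le ((isLpp_iff.1 hm).2 m' hm') fun w hw =>
    apply_eq_zero_of_cls_le hm.1 (by rw [Fin.lt_def] at hw; omega)

lemma IsLpp.toColex_lt {R Q : MvPolynomial (Fin n) K} {mR mQ : Fin n →₀ ℕ}
    (hR : IsLpp R mR) (hQ : IsLpp Q mQ) {v : Fin n} (hRv : cls R ≤ v + 1) (hQv : cls Q ≤ v + 1)
    (h : R.degreeOf v < Q.degreeOf v) : toColex mR < toColex mQ := by
  refine Finsupp.Colex.lt_iff.2 ⟨v, fun w hw => ?_, ?_⟩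
  · rw [Fin.lt_def] at hw
    simp only [ofColex_toColex, apply_eq_zero_of_cls_le hR.1 (show cls R ≤ w by omega),
      apply_eq_zero_of_cls_le hQ.1 (show cls Q ≤ w by omega)]
  · simpa only [ofColex_toColex, hQ.apply_eq_degreeOf hQv] using
      (monomial_le_degreeOf v hR.1).trans_lt h

lemma isLpp_mul_X_pow_add {A W : MvPolynomial (Fin n) K} {mA : Fin n →₀ ℕ} {y : Fin n}
    {d : ℕ} (hA : IsLpp A mA) (hAy : cls A ≤ y) (hW : cls W ≤ y + 1)
    (hWy : W.degreeOf y < d) :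
    IsLpp (A * X y ^ d + W) (mA + Finsupp.single y d) := by
  classical
  have hmA (w : Fin n) (hw : y ≤ w) : mA w = 0 := apply_eq_zero_of_cls_le hA.1 (by
    rw [Fin.le_def] at hw; omega)
  have hW0 (m : Fin n →₀ ℕ) (hm : m ∈ W.support) : m y < d :=
    (monomial_le_degreeOf y hm).trans_lt hWy
  rw [X_pow_eq_monomial]
  refine isLpp_iff.2 ⟨?_, fun m hm => ?_⟩
  · have hWc : W.coeff (mA + Finsupp.single y d) = 0 :=
      notMem_support_iff.1 fun h => by simpa using hW0 _ h
    rw [mem_support_iff, coeff_add, coeff_mul_monomial, hWc, mul_one, add_zero]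
    exact mem_support_iff.1 hA.1
  rcases Finset.mem_union.1 (support_add hm) with hm | hm
  · rw [mem_support_iff, coeff_mul_monomial'] at hm
    split_ifs at hm with hle
    · rw [← tsub_add_cancel_of_le hle, toColex_add, toColex_add]
      gcongr
      exact (isLpp_iff.1 hA).2 _ (mem_support_iff.2 (by simpa using hm))
    · exact absurd rfl hm
  · refine (Finsupp.Colex.lt_iff.2 ⟨y, fun w hw => ?_, ?_⟩).le
    · have hw' : (y : ℕ) < w := hw
      simp [apply_eq_zero_of_cls_le hm (show cls W ≤ w by omega), hmA w hw.le, hw.ne]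
    · simpa [hmA y le_rfl] using hW0 m hm

lemma isLpp_mul_X_pow_add_mul_tail {C A J : MvPolynomial (Fin n) K} {y : Fin n}
    (hC : cls C = y + 1) {mA : Fin n →₀ ℕ} (hA : IsLpp A mA) (hAy : cls A ≤ y)
    (hJ : cls J ≤ y) :
    IsLpp (A * X y ^ C.degreeOf y + J * (C - ini C * X y ^ C.degreeOf y))
      (mA + Finsupp.single y (C.degreeOf y)) := by
  refine isLpp_mul_X_pow_add hA hAy ?_ ?_
  · have := cls_mul_le J (C - ini C * X y ^ C.degreeOf y)
    have := cls_sub_le C (ini C * X y ^ C.degreeOf y)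
    have := cls_mul_le (ini C) (X y ^ C.degreeOf y)
    have := cls_X_pow_le (K := K) y (C.degreeOf y)
    have := cls_ini_lt (show 0 < cls C by omega)
    omega
  · have h₁ := degreeOf_mul_le y J (C - ini C * X y ^ C.degreeOf y)
    have h₂ : (C - ini C * X y ^ C.degreeOf y).degreeOf y < C.degreeOf y := by
      rw [ini_of_cls_eq hC]
      exact degreeOf_sub_lcv_mul_X_pow_lt (degreeOf_pos_of_cls_eq hC)
    rw [degreeOf_eq_zero_of_cls_le hJ, zero_add] at h₁
    omega

lemma isLpp_of_isLpp_ini {C : MvPolynomial (Fin n) K} {y : Fin n} (hC : cls C = y + 1)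
    {m : Fin n →₀ ℕ} (hm : IsLpp (ini C) m) :
    IsLpp C (m + Finsupp.single y (C.degreeOf y)) := by
  have hini := cls_ini_lt (show 0 < cls C by omega)
  convert isLpp_mul_X_pow_add_mul_tail hC hm (by omega) (J := 1) (by simp [cls]) using 1
  ring

/-! ### Iterated pseudo-remainders -/

lemma premTS_cons (P A : MvPolynomial (Fin n) K) (L : List (MvPolynomial (Fin n) K)) :
    premTS P (A :: L) = premLv (premTS P L) A := rfl

lemma premLv_of_cls_eq (G : MvPolynomial (Fin n) K) {F : MvPolynomial (Fin n) K} {v : Fin n}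
    (h : cls F = v + 1) : premLv G F = prem G F v := by
  rw [premLv, dif_pos (vars_nonempty_of_cls_pos (by omega)), max'_eq_of_cls_eq h]

section premTS

variable {L : List (MvPolynomial (Fin n) K)}

lemma exists_premTS_eq_mul_sub (hL : ∀ T ∈ L, 0 < cls T) (P : MvPolynomial (Fin n) K) :
    ∃ J B : MvPolynomial (Fin n) K, premTS P L = J * P - B ∧
      B ∈ Ideal.span {T | T ∈ L} ∧ J ≠ 0 ∧
      ∀ v : Fin n, (∀ T ∈ L, (ini T).degreeOf v = 0) → J.degreeOf v = 0 := by
  induction L with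
  | nil => exact ⟨1, 0, by simp [premTS], by simp, one_ne_zero, fun v _ => by simp⟩
  | cons A L ih =>
    obtain ⟨J, B, hrep, hB, hJ, hJdeg⟩ := ih fun T hT => hL T (List.mem_cons_of_mem A hT)
    have hA := hL A List.mem_cons_self
    obtain ⟨v, hv⟩ := exists_cls_eq_add_one hA
    obtain ⟨e, Q, hQ⟩ := prem_eq_sub (premTS P L) A v
    refine ⟨ini A ^ e * J, ini A ^ e * B + Q * A, ?_, ?_, ?_, fun w hw => ?_⟩
    · rw [premTS_cons, premLv_of_cls_eq _ hv, hQ, hrep, ← ini_of_cls_eq hv]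
      ring
    · refine Ideal.add_mem _ (Ideal.mul_mem_left _ _ (Ideal.span_mono ?_ hB))
        (Ideal.mul_mem_left _ _ (Ideal.subset_span List.mem_cons_self))
      exact fun T hT => List.mem_cons_of_mem A hT
    · exact mul_ne_zero (pow_ne_zero _ (ini_ne_zero hA)) hJ
    · have h₁ := degreeOf_mul_le w (ini A ^ e) J
      have h₂ := degreeOf_pow_le w (ini A) e
      rw [hw A List.mem_cons_self, mul_zero] at h₂
      rw [hJdeg w fun T hT => hw T (List.mem_cons_of_mem A hT)] at h₁
      omega

lemma degreeOf_premTS_le (hL : ∀ T ∈ L, 0 < cls T) (P : MvPolynomial (Fin n) K) {w : Fin n}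
    (hw : ∀ T ∈ L, T.degreeOf w = 0) : (premTS P L).degreeOf w ≤ P.degreeOf w := by
  induction L with
  | nil => exact le_rfl
  | cons A L ih =>
    obtain ⟨v, hv⟩ := exists_cls_eq_add_one (hL A List.mem_cons_self)
    have hwv : w ≠ v := by
      rintro rfl
      exact (degreeOf_pos_of_cls_eq hv).ne' (hw A List.mem_cons_self)
    rw [premTS_cons, premLv_of_cls_eq _ hv]
    exact (degreeOf_prem_le hwv (hw A List.mem_cons_self) _).trans <|
      ih (fun T hT => hL T (List.mem_cons_of_mem A hT)) fun T hT => hw T (List.mem_cons_of_mem A hT)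

lemma cls_premTS_le (hL : ∀ T ∈ L, 0 < cls T) (P : MvPolynomial (Fin n) K) :
    cls (premTS P L) ≤ cls P := by
  induction L with
  | nil => exact le_rfl
  | cons A L ih =>
    obtain ⟨v, hv⟩ := exists_cls_eq_add_one (hL A List.mem_cons_self)
    refine le_trans ?_ (ih fun T hT => hL T (List.mem_cons_of_mem A hT))
    rw [premTS_cons, premLv_of_cls_eq _ hv]
    set Q := premTS P L
    by_cases hQA : cls Q < cls A
    · rw [prem_of_degreeOf_lt]
      rw [degreeOf_eq_zero_of_cls_le (by omega)]
      exact degreeOf_pos_of_cls_eq hv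
    · refine cls_le_iff.2 fun w hw => Nat.eq_zero_of_le_zero ?_
      refine (degreeOf_prem_le (by rintro rfl; omega)
        (degreeOf_eq_zero_of_cls_le (by omega)) Q).trans ?_
      exact (degreeOf_eq_zero_of_cls_le hw).le

lemma rReduced_premTS (hL : ∀ T ∈ L, 0 < cls T) (hsort : L.Pairwise fun A B => cls A < cls B)
    (P : MvPolynomial (Fin n) K) {T : MvPolynomial (Fin n) K} (hT : T ∈ L) :
    RReduced (premTS P L) T := by
  obtain ⟨u, hu⟩ := exists_cls_eq_add_one (hL T hT)
  rw [rReduced_iff_of_cls_eq hu]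
  induction L with
  | nil => simp at hT
  | cons A L ih =>
    obtain ⟨v, hv⟩ := exists_cls_eq_add_one (hL A List.mem_cons_self)
    rw [premTS_cons, premLv_of_cls_eq _ hv]
    rcases List.mem_cons.1 hT with rfl | hT
    · obtain rfl : u = v := Fin.ext (by omega)
      exact degreeOf_prem_lt (degreeOf_pos_of_cls_eq hv) _
    · have hAT := (List.pairwise_cons.1 hsort).1 T hT
      refine lt_of_le_of_lt (degreeOf_prem_le (by rintro rfl; omega)
        (degreeOf_eq_zero_of_cls_le (by omega)) _) ?_
      exact ih (fun T hT => hL T (List.mem_cons_of_mem A hT)) (List.pairwise_cons.1 hsort).2 hT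

end premTS

lemma degLv_ini_eq_zero_of_pairwise {L : List (MvPolynomial (Fin n) K)}
    (hsort : L.Pairwise fun A B => cls A < cls B)
    (hnorm : L.Pairwise fun A B => degLv (ini B) A = 0) {T T' : MvPolynomial (Fin n) K}
    (hT : T ∈ L) (hT' : T' ∈ L) (hpos : 0 < cls T) : degLv (ini T) T' = 0 := by
  let S (A B : MvPolynomial (Fin n) K) : Prop :=
    (cls A < cls B → degLv (ini B) A = 0) ∧ (cls B < cls A → degLv (ini A) B = 0)
  have : Std.Symm S := ⟨fun _ _ h => h.symm⟩
  have hS : L.Pairwise S := (hsort.and hnorm).imp fun h => ⟨fun _ => h.2, fun h' => by omega⟩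
  rcases eq_or_ne T' T with rfl | hne
  · obtain ⟨v, hv⟩ := exists_cls_eq_add_one hpos
    rw [degLv_of_cls_eq _ hv]
    exact degreeOf_ini_of_cls_eq hv
  rcases lt_or_ge (cls T') (cls T) with hlt | hge
  · exact (hS.forall hT' hT hne).1 hlt
  · exact degLv_eq_zero_of_cls_lt ((cls_ini_lt hpos).trans_le hge)

lemma cls_le_of_forall_degreeOf_ini {L : List (MvPolynomial (Fin n) K)}
    {J : MvPolynomial (Fin n) K}
    (hJ : ∀ v : Fin n, (∀ T ∈ L, (ini T).degreeOf v = 0) → J.degreeOf v = 0)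
    (hL : ∀ T ∈ L, 0 < cls T) {k : ℕ} (hk : ∀ T ∈ L, cls T ≤ k) : cls J ≤ k :=
  cls_le_iff.2 fun w hw => hJ w fun T hT =>
    degreeOf_eq_zero_of_cls_le (((cls_ini_lt (hL T hT)).le.trans (hk T hT)).trans hw)

lemma degLv_eq_zero_of_forall_degreeOf_ini {L : List (MvPolynomial (Fin n) K)}
    {J : MvPolynomial (Fin n) K}
    (hJ : ∀ v : Fin n, (∀ T ∈ L, (ini T).degreeOf v = 0) → J.degreeOf v = 0)
    (hL : ∀ T ∈ L, 0 < cls T) (hsort : L.Pairwise fun A B => cls A < cls B)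
    (hnorm : L.Pairwise fun A B => degLv (ini B) A = 0) {T : MvPolynomial (Fin n) K}
    (hT : T ∈ L) : degLv J T = 0 := by
  obtain ⟨v, hv⟩ := exists_cls_eq_add_one (hL T hT)
  rw [degLv_of_cls_eq _ hv]
  exact hJ v fun T' hT' => by
    simpa [degLv_of_cls_eq _ hv] using
      degLv_ini_eq_zero_of_pairwise hsort hnorm hT' hT (hL T' hT')

lemma premTS_mem_of_mem {I : Ideal (MvPolynomial (Fin n) K)} {L : List (MvPolynomial (Fin n) K)}
    (hL : ∀ T ∈ L, 0 < cls T) (hLI : ∀ T ∈ L, T ∈ I) {P : MvPolynomial (Fin n) K}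
    (hP : P ∈ I) : premTS P L ∈ I := by
  obtain ⟨J, B, hrep, hB, -⟩ := exists_premTS_eq_mul_sub hL P
  rw [hrep]
  exact sub_mem (I.mul_mem_left J hP) (Ideal.span_le.2 (fun T hT => hLI T hT) hB)

lemma coefv_premTS_mul_mem_span {L : List (MvPolynomial (Fin n) K)} (hL : ∀ T ∈ L, 0 < cls T)
    {C : MvPolynomial (Fin n) K} {y : Fin n} (hC : cls C = y + 1) (hLy : ∀ T ∈ L, cls T ≤ y)
    {J : MvPolynomial (Fin n) K} (hJ : J * ini C ∈ Ideal.span {T | T ∈ L}) :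
    J * coefv y (C.degreeOf y) (premTS C L) ∈ Ideal.span {T | T ∈ L} := by
  obtain ⟨J₁, B₁, hrep, hB₁, -, hJ₁⟩ := exists_premTS_eq_mul_sub hL C
  have hJ₁y : J₁.degreeOf y = 0 :=
    degreeOf_eq_zero_of_cls_le (cls_le_of_forall_degreeOf_ini hJ₁ hL hLy)
  have hS : coefv y (C.degreeOf y) (premTS C L) = J₁ * ini C - coefv y (C.degreeOf y) B₁ := by
    rw [hrep, coefv_sub, coefv_mul_left hJ₁y, ini_of_cls_eq hC, lcv]
  rw [hS, mul_sub, mul_left_comm]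
  refine sub_mem (Ideal.mul_mem_left _ _ hJ) (Ideal.mul_mem_left _ _ (coefv_mem_span ?_ hB₁ _))
  exact fun T hT => degreeOf_eq_zero_of_cls_le (hLy T hT)

/-! ### W-characteristic sets -/

section WCharSet

variable {I : Ideal (MvPolynomial (Fin n) K)} {Cs : List (MvPolynomial (Fin n) K)}

lemma IsWCharSet.mem_ideal (hW : IsWCharSet I Cs) {c : MvPolynomial (Fin n) K} (hc : c ∈ Cs) :
    c ∈ I := by
  obtain ⟨G, hG, -, hCsG, -⟩ := hW
  exact (hG.1 c (hCsG c hc)).1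

lemma IsWCharSet.pairwise_cls_lt (hW : IsWCharSet I Cs) :
    Cs.Pairwise fun A B => cls A < cls B := by
  obtain ⟨-, -, hchain, -⟩ := hW
  exact List.isChain_iff_pairwise.1 hchain

lemma IsWCharSet.cls_pos_of_triangularSet_take (hW : IsWCharSet I Cs) {k : ℕ}
    (hk : TriangularSet (Cs.take k)) : ∀ c ∈ Cs, 0 < cls c := by
  obtain ⟨hne, hpos, -⟩ := hk
  obtain ⟨a, rest, rfl⟩ := List.exists_cons_of_ne_nil (List.ne_nil_of_take_ne_nil hne)
  obtain ⟨k, rfl⟩ := Nat.exists_eq_succ_of_ne_zero (n := k) (by rintro rfl; simp at hne)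
  have ha : 0 < cls a := hpos a (by simp)
  intro c hc
  rcases List.mem_cons.1 hc with rfl | hc
  · exact ha
  · exact ha.trans ((List.pairwise_cons.1 hW.pairwise_cls_lt).1 c hc)

lemma IsWCharSet.exists_toColex_le (hW : IsWCharSet I Cs) {F : MvPolynomial (Fin n) K}
    (hF : F ∈ I) {mF : Fin n →₀ ℕ} (hmF : IsLpp F mF) :
    ∃ c ∈ Cs, ∃ mc, IsLpp c mc ∧ toColex mc ≤ toColex mF ∧
      ∀ v : Fin n, cls c = v + 1 → c.degreeOf v ≤ mF v := by
  obtain ⟨G, ⟨hG, hGlm, -, -⟩, -, hCsG, hcls, hmin⟩ := hW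
  obtain ⟨g, hg, mg, mF', hmg, hmF', hle⟩ :=
    hGlm F hF (by rintro rfl; simp [IsLpp] at hmF)
  rw [hmF'.unique hmF] at hle
  obtain ⟨c, hc, hcg⟩ := hcls g hg
  obtain ⟨mc, hmc⟩ := exists_isLpp (hG c (hCsG c hc)).2.1
  have hcle : toColex mc ≤ toColex mg := by
    by_cases hgc : g = c
    · rw [hmc.unique (hgc ▸ hmg)]
    · obtain ⟨mc', mg', hmc', hmg', hlt⟩ := hmin c hc g hg hcg.symm hgc
      rw [hmc.unique hmc', hmg.unique hmg']
      exact (plexLT_iff_toColex_lt.1 hlt).le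
  refine ⟨c, hc, mc, hmc, hcle.trans (Finsupp.toColex_monotone hle), fun v hclsc => ?_⟩
  rw [← hmc.apply_eq_degreeOf hclsc.le]
  refine (apply_le_of_toColex_le hcle fun w hw => apply_eq_zero_of_cls_le hmg.1 ?_).trans (hle _)
  rw [Fin.lt_def] at hw
  omega

lemma IsWCharSet.eq_zero_of_forall_rReduced (hW : IsWCharSet I Cs) {F : MvPolynomial (Fin n) K}
    (hF : F ∈ I) (hred : ∀ c ∈ Cs, RReduced F c) : F = 0 := by
  by_contra hF0
  obtain ⟨mF, hmF⟩ := exists_isLpp hF0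
  obtain ⟨c, hc, -, -, -, hdeg⟩ := hW.exists_toColex_le hF hmF
  obtain ⟨v, hv⟩ := exists_cls_eq_add_one (hred c hc).cls_pos
  exact absurd (hdeg v hv) (not_le.2 ((hred c hc).apply_lt hv hmF.1))

variable {L M : List (MvPolynomial (Fin n) K)} {C : MvPolynomial (Fin n) K}

lemma IsWCharSet.pairwise_cls_lt_of_eq_append (hW : IsWCharSet I Cs) (hCs : Cs = L ++ C :: M) :
    L.Pairwise fun A B => cls A < cls B := by
  have := hW.pairwise_cls_lt
  rw [hCs, List.pairwise_append] at this
  exact this.1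

lemma IsWCharSet.cls_lt_of_mem_left (hW : IsWCharSet I Cs) (hCs : Cs = L ++ C :: M)
    {T : MvPolynomial (Fin n) K} (hT : T ∈ L) : cls T < cls C := by
  have := hW.pairwise_cls_lt
  rw [hCs, List.pairwise_append] at this
  exact this.2.2 T hT C List.mem_cons_self

lemma IsWCharSet.cls_lt_of_mem_right (hW : IsWCharSet I Cs) (hCs : Cs = L ++ C :: M)
    {T : MvPolynomial (Fin n) K} (hT : T ∈ M) : cls C < cls T := by
  have := hW.pairwise_cls_lt
  rw [hCs, List.pairwise_append, List.pairwise_cons] at this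
  exact this.2.1.1 T hT

lemma IsWCharSet.mem_left_of_cls_lt (hW : IsWCharSet I Cs) (hCs : Cs = L ++ C :: M)
    {c : MvPolynomial (Fin n) K} (hc : c ∈ Cs) (h : cls c < cls C) : c ∈ L := by
  rw [hCs, List.mem_append, List.mem_cons] at hc
  rcases hc with hc | rfl | hc
  · exact hc
  · omega
  · have := hW.cls_lt_of_mem_right hCs hc
    omega

lemma IsWCharSet.eq_zero_of_rReduced_of_cls_le (hW : IsWCharSet I Cs)
    (hpos : ∀ c ∈ Cs, 0 < cls c) (hCs : Cs = L ++ C :: M) {F : MvPolynomial (Fin n) K}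
    (hF : F ∈ I) (hL : ∀ T ∈ L, RReduced F T) (hC : RReduced F C) (hcls : cls F ≤ cls C) :
    F = 0 := by
  refine hW.eq_zero_of_forall_rReduced hF fun c hc => ?_
  have hc' := hc
  rw [hCs, List.mem_append, List.mem_cons] at hc'
  rcases hc' with hc' | rfl | hc'
  · exact hL c hc'
  · exact hC
  · exact rReduced_of_cls_lt (hpos c hc) (hcls.trans_lt (hW.cls_lt_of_mem_right hCs hc'))

-- Only `C` can account for the leading monomial of `V`; this forces `lpp(ini C) ≤ lpp(R)`.
lemma IsWCharSet.toColex_le_of_isLpp_add_single (hW : IsWCharSet I Cs)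
    (hpos : ∀ c ∈ Cs, 0 < cls c) (hCs : Cs = L ++ C :: M) {y : Fin n} (hy : cls C = y + 1)
    {R : MvPolynomial (Fin n) K} {mR : Fin n →₀ ℕ} (hmR : IsLpp R mR) (hRy : cls R ≤ y)
    (hred : ∀ T ∈ L, RReduced R T) {V : MvPolynomial (Fin n) K} (hV : V ∈ I)
    (hmV : IsLpp V (mR + Finsupp.single y (C.degreeOf y))) {mI : Fin n →₀ ℕ}
    (hmI : IsLpp (ini C) mI) : toColex mI ≤ toColex mR := by
  obtain ⟨c, hc, mc, hmc, hle, hdeg⟩ := hW.exists_toColex_le hV hmV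
  obtain ⟨v, hv⟩ := exists_cls_eq_add_one (hpos c hc)
  have hdegv := hdeg v hv
  rw [Finsupp.add_apply] at hdegv
  have hc' := hc
  rw [hCs, List.mem_append, List.mem_cons] at hc'
  rcases hc' with hc' | rfl | hc'
  · have := (hred c hc').apply_lt hv hmR.1
    rw [Finsupp.single_eq_of_ne (by rintro rfl; have := hW.cls_lt_of_mem_left hCs hc'; omega),
      add_zero] at hdegv
    omega
  · rw [hmc.unique (isLpp_of_isLpp_ini hy hmI), toColex_add, toColex_add] at hle
    exact le_of_add_le_add_right hle
  · have := hW.cls_lt_of_mem_right hCs hc'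
    rw [apply_eq_zero_of_cls_le hmR.1 (by omega),
      Finsupp.single_eq_of_ne (by rintro rfl; omega)] at hdegv
    have := degreeOf_pos_of_cls_eq hv
    omega

theorem IsWCharSet.premTS_ini_eq_zero (hW : IsWCharSet I Cs) (hpos : ∀ c ∈ Cs, 0 < cls c)
    (hCs : Cs = L ++ C :: M) {Cl : MvPolynomial (Fin n) K} (hCl : Cl ∈ Cs)
    (hlv : cls (ini C) = cls Cl) (hnred : ¬ RReduced (ini C) Cl) : premTS (ini C) L = 0 := by
  have hLCs (T) (hT : T ∈ L) : T ∈ Cs := by simp [hCs, hT]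
  have hLpos (T) (hT : T ∈ L) : 0 < cls T := hpos T (hLCs T hT)
  have hsort := hW.pairwise_cls_lt_of_eq_append hCs
  have hCpos := hpos C (by simp [hCs])
  obtain ⟨y, hy⟩ := exists_cls_eq_add_one hCpos
  obtain ⟨yl, hyl⟩ := exists_cls_eq_add_one (hpos Cl hCl)
  have hiniC := cls_ini_lt hCpos
  have hLy (T) (hT : T ∈ L) : cls T ≤ y := by have := hW.cls_lt_of_mem_left hCs hT; omega
  obtain ⟨J, B, hrep, hB, -, hJ⟩ := exists_premTS_eq_mul_sub hLpos (ini C)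
  set R := premTS (ini C) L
  have hRcls : cls R ≤ cls Cl := hlv ▸ cls_premTS_le hLpos (ini C)
  by_contra hR0
  obtain ⟨mR, hmR⟩ := exists_isLpp hR0
  obtain ⟨mI, hmI⟩ := exists_isLpp (ini_ne_zero hCpos)
  have hVI : R * X y ^ C.degreeOf y + J * (C - ini C * X y ^ C.degreeOf y) ∈ I := by
    rw [show R * X y ^ C.degreeOf y + J * (C - ini C * X y ^ C.degreeOf y)
        = J * C - B * X y ^ C.degreeOf y by rw [hrep]; ring]
    exact sub_mem (I.mul_mem_left _ (hW.mem_ideal (by simp [hCs])))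
      (I.mul_mem_right _ (Ideal.span_le.2 (fun T hT => hW.mem_ideal (hLCs T hT)) hB))
  have hle := hW.toColex_le_of_isLpp_add_single hpos hCs hy hmR (by omega)
    (fun T hT => rReduced_premTS hLpos hsort _ hT) hVI
    (isLpp_mul_X_pow_add_mul_tail hy hmR (by omega) (cls_le_of_forall_degreeOf_ini hJ hLpos hLy))
    hmI
  -- `R` is R-reduced with respect to `C_l` while `ini C` is not, and `lv(ini C) = lv(C_l)`.
  have hRyl : R.degreeOf yl < Cl.degreeOf yl := (rReduced_iff_of_cls_eq hyl).1
    (rReduced_premTS hLpos hsort (ini C) (hW.mem_left_of_cls_lt hCs hCl (by omega)))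
  rw [rReduced_iff_of_cls_eq hyl, not_lt] at hnred
  exact absurd hle (not_le.2 (hmR.toColex_lt hmI (by omega) (by omega) (hRyl.trans_le hnred)))

theorem IsWCharSet.premTS_eq_zero_of_premTS_ini_eq_zero (hW : IsWCharSet I Cs)
    (hpos : ∀ c ∈ Cs, 0 < cls c) (hCs : Cs = L ++ C :: M)
    (hnorm : L.Pairwise fun A B => degLv (ini B) A = 0) (hini : premTS (ini C) L = 0) :
    premTS C L = 0 := by
  have hLCs (T) (hT : T ∈ L) : T ∈ Cs := by simp [hCs, hT]
  have hLpos (T) (hT : T ∈ L) : 0 < cls T := hpos T (hLCs T hT)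
  have hsort := hW.pairwise_cls_lt_of_eq_append hCs
  obtain ⟨y, hy⟩ := exists_cls_eq_add_one (hpos C (by simp [hCs]))
  have hLy (T) (hT : T ∈ L) : cls T ≤ y := by have := hW.cls_lt_of_mem_left hCs hT; omega
  have hRI : premTS C L ∈ I :=
    premTS_mem_of_mem hLpos (fun T hT => hW.mem_ideal (hLCs T hT)) (hW.mem_ideal (by simp [hCs]))
  have hRcls : cls (premTS C L) ≤ cls C := cls_premTS_le hLpos C
  obtain ⟨J, B, hrep, hB, hJ0, hJ⟩ := exists_premTS_eq_mul_sub hLpos (ini C)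
  set S := coefv y (C.degreeOf y) (premTS C L)
  have hJScls : cls (J * S) < cls C := by
    have := cls_mul_le J S
    have := cls_le_of_forall_degreeOf_ini hJ hLpos hLy
    have : cls S ≤ y := cls_coefv_le (by omega) _
    omega
  have hS0 : S = 0 := by
    have hJS : J * S ∈ I :=
      Ideal.span_le.2 (fun T hT => hW.mem_ideal (hLCs T hT))
        (coefv_premTS_mul_mem_span hLpos hy hLy (sub_eq_zero.1 (hrep ▸ hini) ▸ hB))
    refine (mul_eq_zero.1 (hW.eq_zero_of_rReduced_of_cls_le hpos hCs hJS (fun T hT => ?_)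
      (rReduced_of_cls_lt (by omega) hJScls) hJScls.le)).resolve_left hJ0
    exact ((rReduced_premTS hLpos hsort C hT).coefv _ _).mul_left
      (degLv_eq_zero_of_forall_degreeOf_ini hJ hLpos hsort hnorm hT)
  refine hW.eq_zero_of_rReduced_of_cls_le hpos hCs hRI
    (fun T hT => rReduced_premTS hLpos hsort C hT) ?_ hRcls
  rw [rReduced_iff_of_cls_eq hy]
  refine lt_of_le_of_ne (degreeOf_premTS_le hLpos C fun T hT =>
    degreeOf_eq_zero_of_cls_le (hLy T hT)) fun h => ?_
  rcases eq_or_ne (premTS C L) 0 with hR0 | hR0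
  · rw [hR0, degreeOf_zero] at h
    exact (degreeOf_pos_of_cls_eq hy).ne h
  · exact coefv_degreeOf_ne_zero hR0 y (h ▸ hS0)

end WCharSet

/-- `C_{k+1}` is `Cs.getD k 0` and `C_l` is `Cs.getD l 0` (0-based indexing). -/
theorem statement13_general {n : ℕ} {K : Type*} [Field K]
    (P : Finset (MvPolynomial (Fin n) K))
    (Cs : List (MvPolynomial (Fin n) K))
    (hW : IsWCharSet (Ideal.span (P : Set (MvPolynomial (Fin n) K))) Cs)
    (k : ℕ) (hkr : k < Cs.length)
    (hnorm : NormalSet (Cs.take k))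
    (l : ℕ) (hl : l < Cs.length)
    (hlv : cls (ini (Cs.getD k 0)) = cls (Cs.getD l 0))
    (hnred : ¬ RReduced (ini (Cs.getD k 0)) (Cs.getD l 0)) :
    premTS (ini (Cs.getD k 0)) (Cs.take k) = 0 ∧
      premTS (Cs.getD k 0) (Cs.take k) = 0 := by
  have hpos := hW.cls_pos_of_triangularSet_take hnorm.1
  have hCs : Cs = Cs.take k ++ Cs.getD k 0 :: Cs.drop (k + 1) := by
    rw [List.getD_eq_getElem _ _ hkr, ← List.drop_eq_getElem_cons hkr, List.take_append_drop]
  have hCl : Cs.getD l 0 ∈ Cs := List.getD_eq_getElem _ _ hl ▸ List.getElem_mem hl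
  have hini := hW.premTS_ini_eq_zero hpos hCs hCl hlv hnred
  exact ⟨hini, hW.premTS_eq_zero_of_premTS_ini_eq_zero hpos hCs hnorm.2 hini⟩

/-- Theorem mainth1. Let `[C_1, …, C_r]` be the W-characteristic set of
`⟨P⟩` under the variable ordering in which the leading variables of the `C_i` are the `r`
greatest variables (`u_1 < ⋯ < u_m < y_1 < ⋯ < y_r` with `y_i = lv(C_i)`). For any
`1 ≤ k < r`, if `C_k = [C_1, …, C_k]` is normal and `I_{k+1} = ini(C_{k+1})`, with
`lv(I_{k+1}) = y_l`, is not R-reduced with respect to `C_l`, then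
`prem(I_{k+1}, C_k) = 0` and `prem(C_{k+1}, C_k) = 0`.
(Here `C_{k+1} = Cs.getD k 0` and `C_l = Cs.getD l 0` in 0-based indexing.) -/
theorem statement13 {n : ℕ} {K : Type*} [Field K]
    (P : Finset (MvPolynomial (Fin n) K)) (hne : P.Nonempty) (h0 : ∀ p ∈ P, p ≠ 0)
    (hproper : Ideal.span (P : Set (MvPolynomial (Fin n) K)) ≠ ⊤)
    (Cs : List (MvPolynomial (Fin n) K))
    (hW : IsWCharSet (Ideal.span (P : Set (MvPolynomial (Fin n) K))) Cs)
    (hord : ∀ i, i < Cs.length → cls (Cs.getD i 0) = n - Cs.length + i + 1)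
    (k : ℕ) (hk1 : 1 ≤ k) (hkr : k < Cs.length)
    (hnorm : NormalSet (Cs.take k))
    (l : ℕ) (hl : l < Cs.length)
    (hlv : cls (ini (Cs.getD k 0)) = cls (Cs.getD l 0))
    (hnred : ¬ RReduced (ini (Cs.getD k 0)) (Cs.getD l 0)) :
    premTS (ini (Cs.getD k 0)) (Cs.take k) = 0 ∧
      premTS (Cs.getD k 0) (Cs.take k) = 0 :=
  statement13_general P Cs hW k hkr hnorm l hl hlv hnred

end CharSets
end
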